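/- With the same setup (W* symmetric positive definite, C* = [C̄; C_low] full row rank, M⁺ = I - W* C̄'(C̄ W* C̄')⁻¹ C̄), the matrix W*(C*'(C* W* C*')⁻¹ C* - C̄'(C̄ W* C̄')⁻¹ C̄)W* = W* M⁺' C_low' (C_low M⁺ W* C_low')⁻¹ C_low M⁺ W* is positive semi-definite. Consequently, for any selection matrix J*, each diagonal entry of J* W* C*'(C* W* C*')⁻¹ C* W* J*' minus the corresponding diagonal entry of J* W* C̄'(C̄ W* C̄')⁻¹ C̄ W* J*' is non-negative (monotonicity of variance reduction as constraints are added). -/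

import Mathlib

/-!
Split the Gram matrix `C* W* C*ᵀ` into blocks along `C* = [C̄; C_low]`. Block inversion through
the Schur complement `S = C_low M⁺ W* C_lowᵀ` turns the difference of the two weighted
projections `C*ᵀ (C* W* C*ᵀ)⁻¹ C* - C̄ᵀ (C̄ W* C̄ᵀ)⁻¹ C̄` into `M⁺ᵀ C_lowᵀ S⁻¹ C_low M⁺`. As a Schur
complement of a positive semidefinite Gram matrix, `S` is positive semidefinite, so
`W* (…) W*` is a congruence of `S⁻¹` and hence positive semidefinite; compressing by `J*` keeps
this, which gives the diagonal inequalities.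
-/

open Matrix

namespace Matrix

section CommRing

variable {R n k l : Type*} [CommRing R]

theorem inv_fromBlocks₁₁_of_isUnit [Fintype k] [Fintype l] [DecidableEq k] [DecidableEq l]
    (A : Matrix k k R) (B : Matrix k l R) (C : Matrix l k R) (D : Matrix l l R)
    (hA : IsUnit A.det) (hK : IsUnit (fromBlocks A B C D).det) :
    (fromBlocks A B C D)⁻¹ =
      fromBlocks (A⁻¹ + A⁻¹ * B * (D - C * A⁻¹ * B)⁻¹ * C * A⁻¹)
        (-(A⁻¹ * B * (D - C * A⁻¹ * B)⁻¹)) (-((D - C * A⁻¹ * B)⁻¹ * C * A⁻¹))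
        (D - C * A⁻¹ * B)⁻¹ := by
  let := A.invertibleOfIsUnitDet hA
  let := (fromBlocks A B C D).invertibleOfIsUnitDet hK
  let := invertibleOfFromBlocks₁₁Invertible A B C D
  simp only [← invOf_eq_nonsing_inv, invOf_fromBlocks₁₁_eq]

theorem fromRows_mul_mul_transpose_fromRows [Fintype n] (W : Matrix n n R) (C₁ : Matrix k n R)
    (C₂ : Matrix l n R) :
    fromRows C₁ C₂ * W * (fromRows C₁ C₂)ᵀ =
      fromBlocks (C₁ * W * C₁ᵀ) (C₁ * W * C₂ᵀ) (C₂ * W * C₁ᵀ) (C₂ * W * C₂ᵀ) := by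
  rw [transpose_fromRows, fromRows_mul, fromRows_mul_fromCols]

/-- The projection onto `ker C` along the range of `W * Cᵀ`; this is the paper's `M⁺`. -/
noncomputable def kerProjection [Fintype n] [DecidableEq n] [Fintype k] [DecidableEq k]
    (W : Matrix n n R) (C : Matrix k n R) : Matrix n n R :=
  1 - W * Cᵀ * (C * W * Cᵀ)⁻¹ * C

theorem mul_kerProjection_mul_transpose [Fintype n] [DecidableEq n] [Fintype k]
    [DecidableEq k] (W : Matrix n n R) (C₁ : Matrix k n R) (C₂ : Matrix l n R) :
    C₂ * kerProjection W C₁ * W * C₂ᵀ =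
      C₂ * W * C₂ᵀ - C₂ * W * C₁ᵀ * (C₁ * W * C₁ᵀ)⁻¹ * (C₁ * W * C₂ᵀ) := by
  simp only [kerProjection, Matrix.mul_sub, Matrix.sub_mul, Matrix.mul_one, Matrix.mul_assoc]

theorem transpose_kerProjection [Fintype n] [DecidableEq n] [Fintype k] [DecidableEq k]
    {W : Matrix n n R} (hW : Wᵀ = W) (C : Matrix k n R) :
    (kerProjection W C)ᵀ = 1 - Cᵀ * (C * W * Cᵀ)⁻¹ * C * W := by
  simp only [kerProjection, transpose_sub, transpose_one, transpose_mul, transpose_transpose,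
    transpose_nonsing_inv, hW, Matrix.mul_assoc]

theorem transpose_fromRows_mul_inv_mul_fromRows_sub [Fintype n] [DecidableEq n] [Fintype k]
    [DecidableEq k] [Fintype l] [DecidableEq l] {W : Matrix n n R} (hW : Wᵀ = W)
    (C₁ : Matrix k n R) (C₂ : Matrix l n R) (hA : IsUnit (C₁ * W * C₁ᵀ).det)
    (hK : IsUnit (fromRows C₁ C₂ * W * (fromRows C₁ C₂)ᵀ).det) :
    (fromRows C₁ C₂)ᵀ * (fromRows C₁ C₂ * W * (fromRows C₁ C₂)ᵀ)⁻¹ * fromRows C₁ C₂ -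
        C₁ᵀ * (C₁ * W * C₁ᵀ)⁻¹ * C₁ =
      (kerProjection W C₁)ᵀ * C₂ᵀ * (C₂ * kerProjection W C₁ * W * C₂ᵀ)⁻¹ * C₂ *
        kerProjection W C₁ := by
  rw [fromRows_mul_mul_transpose_fromRows] at hK ⊢
  rw [inv_fromBlocks₁₁_of_isUnit _ _ _ _ hA hK, transpose_fromRows, fromCols_mul_fromBlocks,
    fromCols_mul_fromRows, mul_kerProjection_mul_transpose, transpose_kerProjection hW]
  simp only [kerProjection, Matrix.mul_sub, Matrix.sub_mul, Matrix.mul_add, Matrix.add_mul,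
    Matrix.mul_one, Matrix.one_mul, Matrix.neg_mul, Matrix.mul_neg, Matrix.mul_assoc]
  abel

end CommRing

section PosSemidef

variable {K m n k l : Type*} [Field K] [PartialOrder K] [StarRing K] [TrivialStar K]
  [Fintype n] [Fintype k]

theorem PosDef.mul_mul_transpose_of_linearIndependent_row {W : Matrix n n K} (hW : W.PosDef)
    {C : Matrix k n K} (hC : LinearIndependent K C.row) : (C * W * Cᵀ).PosDef := by
  simpa using hW.mul_mul_conjTranspose_same (vecMul_injective_iff.mpr hC)

theorem PosSemidef.mul_kerProjection_mul_transpose [StarOrderedRing K] [Fintype l]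
    [DecidableEq n] [DecidableEq k] {W : Matrix n n K} (hW : W.PosSemidef)
    {C₁ : Matrix k n K} (hA : (C₁ * W * C₁ᵀ).PosDef) (C₂ : Matrix l n K) :
    (C₂ * kerProjection W C₁ * W * C₂ᵀ).PosSemidef := by
  have hK := hW.mul_mul_conjTranspose_same (fromRows C₁ C₂)
  have hWt : Wᵀ = W := by simpa using hW.isHermitian.eq
  have hB : (C₁ * W * C₂ᵀ)ᴴ = C₂ * W * C₁ᵀ := by
    simp [transpose_mul, hWt, Matrix.mul_assoc]
  let := hA.isUnit.invertible
  rw [conjTranspose_eq_transpose_of_trivial, fromRows_mul_mul_transpose_fromRows, ← hB] at hK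
  rw [Matrix.mul_kerProjection_mul_transpose, ← hB]
  exact (PosDef.fromBlocks₁₁ _ _ hA).mp hK

theorem diag_mul_mul_transpose_le_of_posSemidef_sub [StarOrderedRing K] [Fintype m]
    {X Y : Matrix n n K} (h : (Y - X).PosSemidef) (J : Matrix m n K) (i : m) :
    (J * X * Jᵀ) i i ≤ (J * Y * Jᵀ) i i := by
  have := (h.mul_mul_conjTranspose_same J).diag_nonneg (i := i)
  simp only [Matrix.mul_sub, Matrix.sub_mul, conjTranspose_eq_transpose_of_trivial, sub_apply]
    at this
  exact sub_nonneg.mp this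

end PosSemidef

theorem linearIndependent_row_of_rank_eq_card {K m n : Type*} [Field K] [Fintype m] [Fintype n]
    {M : Matrix m n K} (h : M.rank = Fintype.card m) : LinearIndependent K M.row := by
  rw [linearIndependent_iff_card_eq_finrank_span, ← h, rank_eq_finrank_span_row, Set.finrank]

end Matrix

theorem flap_monotonicity_of_variance_reduction (m r p q : ℕ)
    (Wstar : Matrix (Fin m ⊕ Fin r) (Fin m ⊕ Fin r) ℝ) (hWstar : Wstar.PosDef)
    (Cbar : Matrix (Fin p) (Fin m ⊕ Fin r) ℝ)
    (Clow : Matrix (Fin q) (Fin m ⊕ Fin r) ℝ)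
    (hrank : (fromRows Cbar Clow).rank = p + q) :
    let Cstar : Matrix (Fin p ⊕ Fin q) (Fin m ⊕ Fin r) ℝ := fromRows Cbar Clow
    let Mplus : Matrix (Fin m ⊕ Fin r) (Fin m ⊕ Fin r) ℝ :=
      1 - Wstar * Cbarᵀ * (Cbar * Wstar * Cbarᵀ)⁻¹ * Cbar
    let Jstar : Matrix (Fin m) (Fin m ⊕ Fin r) ℝ := fromCols 1 0
    (Wstar * (Cstarᵀ * (Cstar * Wstar * Cstarᵀ)⁻¹ * Cstar -
        Cbarᵀ * (Cbar * Wstar * Cbarᵀ)⁻¹ * Cbar) * Wstar =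
      Wstar * Mplusᵀ * Clowᵀ * (Clow * Mplus * Wstar * Clowᵀ)⁻¹ * Clow * Mplus * Wstar) ∧
    (Wstar * (Cstarᵀ * (Cstar * Wstar * Cstarᵀ)⁻¹ * Cstar -
        Cbarᵀ * (Cbar * Wstar * Cbarᵀ)⁻¹ * Cbar) * Wstar).PosSemidef ∧
    ∀ i, (Jstar * Wstar * Cbarᵀ * (Cbar * Wstar * Cbarᵀ)⁻¹ * Cbar * Wstar * Jstarᵀ) i i ≤
      (Jstar * Wstar * Cstarᵀ * (Cstar * Wstar * Cstarᵀ)⁻¹ * Cstar * Wstar * Jstarᵀ) i i := by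
  intro Cstar Mplus Jstar
  have hW : Wstarᵀ = Wstar := by simpa using hWstar.isHermitian.eq
  have hCstar : LinearIndependent ℝ Cstar.row :=
    linearIndependent_row_of_rank_eq_card (by simpa using hrank)
  have hA : (Cbar * Wstar * Cbarᵀ).PosDef := hWstar.mul_mul_transpose_of_linearIndependent_row
    (hCstar.comp Sum.inl Sum.inl_injective)
  have hK : (Cstar * Wstar * Cstarᵀ).PosDef :=
    hWstar.mul_mul_transpose_of_linearIndependent_row hCstar
  have hS : (Clow * Mplus * Wstar * Clowᵀ).PosSemidef :=
    hWstar.posSemidef.mul_kerProjection_mul_transpose hA Clow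
  have hEq : Wstar * (Cstarᵀ * (Cstar * Wstar * Cstarᵀ)⁻¹ * Cstar -
      Cbarᵀ * (Cbar * Wstar * Cbarᵀ)⁻¹ * Cbar) * Wstar =
      Wstar * Mplusᵀ * Clowᵀ * (Clow * Mplus * Wstar * Clowᵀ)⁻¹ * Clow * Mplus * Wstar := by
    rw [transpose_fromRows_mul_inv_mul_fromRows_sub hW Cbar Clow
      ((isUnit_iff_isUnit_det _).mp hA.isUnit) ((isUnit_iff_isUnit_det _).mp hK.isUnit)]
    simp only [Matrix.mul_assoc]
    rfl
  have hPSD : (Wstar * (Cstarᵀ * (Cstar * Wstar * Cstarᵀ)⁻¹ * Cstar -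
      Cbarᵀ * (Cbar * Wstar * Cbarᵀ)⁻¹ * Cbar) * Wstar).PosSemidef := by
    have := hS.inv.conjTranspose_mul_mul_same (Clow * Mplus * Wstar)
    rw [hEq]
    simpa [transpose_mul, hW, Matrix.mul_assoc] using this
  refine ⟨hEq, hPSD, fun i => ?_⟩
  have hdiff : Wstar * Cstarᵀ * (Cstar * Wstar * Cstarᵀ)⁻¹ * Cstar * Wstar -
      Wstar * Cbarᵀ * (Cbar * Wstar * Cbarᵀ)⁻¹ * Cbar * Wstar =
      Wstar * (Cstarᵀ * (Cstar * Wstar * Cstarᵀ)⁻¹ * Cstar -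
        Cbarᵀ * (Cbar * Wstar * Cbarᵀ)⁻¹ * Cbar) * Wstar := by
    simp only [Matrix.mul_sub, Matrix.sub_mul, Matrix.mul_assoc]
  have := diag_mul_mul_transpose_le_of_posSemidef_sub (hdiff ▸ hPSD) Jstar i
  simpa only [Matrix.mul_assoc] using this
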